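/- arXiv:2502.14690 — 2 statements merged into one kernel-verified Lean document; each statement's English description precedes it below -/
import Mathlib

section
/- For every RRC market and every linear order σ of the students, the serial dictatorship matching SD(σ) is feasible, individually rational, non-wasteful, and Pareto-efficient for students. -/
namespace RRC

section Defs

variable (S C R : Type)

/-- A matching market with resource-regional caps (RRC).  Students `S`, colleges `C`,
non-empty resources `R`; the empty resource `r0` is represented by `none : Option R`. -/
structure Market where
  /-- quota of each college -/
  qC : C → ℕ
  qC_pos : ∀ c, 0 < qC c
  /-- quota of each non-empty resource -/
  qR : R → ℕ
  qR_pos : ∀ r, 0 < qR r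
  /-- region of each non-empty resource (the region of `r0` is all of `C`) -/
  region : R → Finset C
  region_nonempty : ∀ r, (region r).Nonempty
  /-- strict priority order of each college over students -/
  prC : C → S → S → Prop
  prC_sto : ∀ c, IsStrictTotalOrder S (prC c)
  /-- strict preference order of each student over `(C × R0) ∪ {∅}`;
  `none` is the outside option `∅` -/
  prS : S → Option (C × Option R) → Option (C × Option R) → Prop
  prS_sto : ∀ s, IsStrictTotalOrder (Option (C × Option R)) (prS s)

/-- A matching: each student appears in at most one contract, so a matching is a
function from students to optional (college, resource) pairs. -/
abbrev Matching := S → Option (C × Option R)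

variable {S C R} [DecidableEq S]

/-- Number of contracts of the college `c` in `μ`. -/
noncomputable def collegeCount (μ : Matching S C R) (c : C) : ℕ :=
  {s : S | ∃ r, μ s = some (c, r)}.ncard

/-- Number of contracts containing the non-empty resource `r` in `μ`. -/
noncomputable def resourceCount (μ : Matching S C R) (r : R) : ℕ :=
  {s : S | ∃ c, μ s = some (c, some r)}.ncard

/-- Feasibility: college quotas, resource quotas, and regions are respected. -/
def Feasible (M : Market S C R) (μ : Matching S C R) : Prop :=
  (∀ c, collegeCount μ c ≤ M.qC c) ∧
  (∀ r, resourceCount μ r ≤ M.qR r) ∧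
  (∀ s c r, μ s = some (c, some r) → c ∈ M.region r)

/-- A pair `(c, r)` is acceptable for `s` if `s` prefers it to being unmatched. -/
def Acceptable (M : Market S C R) (s : S) (c : C) (r : Option R) : Prop :=
  M.prS s (some (c, r)) none

/-- Individual rationality: no unacceptable contract is used. -/
def IndRational (M : Market S C R) (μ : Matching S C R) : Prop :=
  ∀ s x, μ s = some x → M.prS s (some x) none

/-- The contract `(s, c, r) ∉ μ` envy-blocks `μ` through `(s', c, r') ∈ μ`. -/
def EnvyBlocksThrough (M : Market S C R) (μ : Matching S C R)
    (s : S) (c : C) (r : Option R) (s' : S) (r' : Option R) : Prop :=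
  μ s ≠ some (c, r) ∧ μ s' = some (c, r') ∧
  M.prS s (some (c, r)) (μ s) ∧ M.prC c s s' ∧
  Feasible M (Function.update (Function.update μ s' none) s (some (c, r)))

def EnvyBlocks (M : Market S C R) (μ : Matching S C R)
    (s : S) (c : C) (r : Option R) : Prop :=
  ∃ s' r', EnvyBlocksThrough M μ s c r s' r'

def EnvyFree (M : Market S C R) (μ : Matching S C R) : Prop :=
  ∀ s c r, ¬ EnvyBlocks M μ s c r

/-- The contract `(s, c, r) ∉ μ` waste-blocks `μ`. -/
def WasteBlocks (M : Market S C R) (μ : Matching S C R)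
    (s : S) (c : C) (r : Option R) : Prop :=
  μ s ≠ some (c, r) ∧ M.prS s (some (c, r)) (μ s) ∧
  Feasible M (Function.update μ s (some (c, r)))

def NonWasteful (M : Market S C R) (μ : Matching S C R) : Prop :=
  ∀ s c r, ¬ WasteBlocks M μ s c r

/-- Stability: feasible, individually rational, no envy-blocking and no
waste-blocking contract. -/
def Stable (M : Market S C R) (μ : Matching S C R) : Prop :=
  Feasible M μ ∧ IndRational M μ ∧ EnvyFree M μ ∧ NonWasteful M μ

/-- `(s, c, r)` direct-envy-blocks `μ`: it envy-blocks through some `(s', c, r')`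
with `r ∈ {r', r0}`. -/
def DirectEnvyBlocks (M : Market S C R) (μ : Matching S C R)
    (s : S) (c : C) (r : Option R) : Prop :=
  ∃ s' r', EnvyBlocksThrough M μ s c r s' r' ∧ (r = r' ∨ r = none)

/-- The waste-blocking contract `(s, c, r)` is dominated by `(s', c, r') ∉ μ`. -/
def Dominates (M : Market S C R) (μ : Matching S C R)
    (s : S) (c : C) (r : Option R) (s' : S) (r' : Option R) : Prop :=
  μ s' ≠ some (c, r') ∧
  ¬ WasteBlocks M μ s' c r' ∧ ¬ DirectEnvyBlocks M μ s' c r' ∧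
  DirectEnvyBlocks M (Function.update μ s (some (c, r))) s' c r'

/-- Direct-envy stability: feasible, individually rational, no direct-envy-blocking
contract, and every waste-blocking contract is dominated. -/
def DirectEnvyStable (M : Market S C R) (μ : Matching S C R) : Prop :=
  Feasible M μ ∧ IndRational M μ ∧
  (∀ s c r, ¬ DirectEnvyBlocks M μ s c r) ∧
  (∀ s c r, WasteBlocks M μ s c r → ∃ s' r', Dominates M μ s c r s' r')

/-- Weak stability: no direct-envy-blocking contract, and every waste-blocking
contract involves a non-empty resource whose quota is fully used. -/
def WeaklyStable (M : Market S C R) (μ : Matching S C R) : Prop :=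
  Feasible M μ ∧ IndRational M μ ∧
  (∀ s c r, ¬ DirectEnvyBlocks M μ s c r) ∧
  (∀ s c (r : Option R), WasteBlocks M μ s c r →
    ∃ r₁, r = some r₁ ∧ resourceCount μ r₁ = M.qR r₁)

/-- A waste-blocking contract is resource-blocking if the student is already
admitted to the same college. -/
def ResourceBlocks (M : Market S C R) (μ : Matching S C R)
    (s : S) (c : C) (r : Option R) : Prop :=
  WasteBlocks M μ s c r ∧ ∃ r', μ s = some (c, r')

/-- A waste-blocking contract is seat-blocking if the student is not admitted to
the same college. -/
def SeatBlocks (M : Market S C R) (μ : Matching S C R)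
    (s : S) (c : C) (r : Option R) : Prop :=
  WasteBlocks M μ s c r ∧ ¬ ∃ r', μ s = some (c, r')

def ResourceEfficient (M : Market S C R) (μ : Matching S C R) : Prop :=
  ∀ s c r, ¬ ResourceBlocks M μ s c r

def SeatEfficient (M : Market S C R) (μ : Matching S C R) : Prop :=
  ∀ s c r, ¬ SeatBlocks M μ s c r

end Defs

section Cutoffs

variable {S C R : Type} [Fintype S]

/-- A cutoff profile: one cutoff per (college, resource) pair, bounded by the
number of students, with the cutoff for the empty resource the largest. -/
def IsCutoffProfile (St : Type) [Fintype St] {Co Re : Type}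
    (K : Co → Option Re → ℕ) : Prop :=
  (∀ c r, K c r ≤ Fintype.card St) ∧ ∀ c (r : Re), K c (some r) ≤ K c none

/-- Rank of student `s` in the priority order of college `c` (0 = best). -/
noncomputable def studentRank (M : Market S C R) (c : C) (s : S) : ℕ :=
  {s' : S | M.prC c s' s}.ncard

/-- `(s, c, r)` is permitted by the cutoff profile `K` if `s` is among the top
`K c r` students of `c`'s priority order. -/
noncomputable def Permitted (M : Market S C R) (K : C → Option R → ℕ)
    (s : S) (c : C) (r : Option R) : Prop :=
  studentRank M c s < K c r

/-- `μ` is the matching induced by the cutoff profile `K`: every student gets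
their most preferred acceptable permitted contract, if any. -/
def IsInduced (M : Market S C R) (K : C → Option R → ℕ) (μ : Matching S C R) : Prop :=
  ∀ s : S,
    (∀ c r, μ s = some (c, r) →
      Permitted M K s c r ∧ Acceptable M s c r ∧
      ∀ c' r', Permitted M K s c' r' → Acceptable M s c' r' →
        (c', r') ≠ (c, r) → M.prS s (some (c, r)) (some (c', r'))) ∧
    (μ s = none → ∀ c r, ¬ (Permitted M K s c r ∧ Acceptable M s c r))

/-- `K + 1_r^c`: increase the cutoff of `(c, r)` by one (simultaneously increasing
the cutoff of `(c, r0)` if it was equal to that of `(c, r)`). -/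
def bump [DecidableEq C] [DecidableEq R] (K : C → Option R → ℕ)
    (c : C) (r : Option R) : C → Option R → ℕ :=
  fun c' r' =>
    if c' = c ∧ (r' = r ∨ (r' = none ∧ r ≠ none ∧ K c none = K c r)) then K c' r' + 1
    else K c' r'

/-- An optimal cutoff profile: the induced matching is feasible, and increasing any
non-maximal cutoff yields an infeasible induced matching. -/
def OptimalCutoffs [DecidableEq C] [DecidableEq R]
    (M : Market S C R) (K : C → Option R → ℕ) : Prop :=
  IsCutoffProfile S K ∧
  (∀ μ, IsInduced M K μ → Feasible M μ) ∧
  ∀ c r, K c r < Fintype.card S →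
    ∀ μ', IsInduced M (bump K c r) μ' → ¬ Feasible M μ'

end Cutoffs

section SD

variable {S C R : Type} [DecidableEq S]

/-- `x` is the most preferred contract of the (unmatched) student `s` given the
current matching `μ`: the best acceptable contract keeping the matching feasible,
or `none` if there is no such contract. -/
def BestChoice (M : Market S C R) (μ : Matching S C R) (s : S)
    (x : Option (C × Option R)) : Prop :=
  match x with
  | some (c, r) =>
      Acceptable M s c r ∧ Feasible M (Function.update μ s (some (c, r))) ∧
      ∀ c' r', Acceptable M s c' r' → Feasible M (Function.update μ s (some (c', r'))) →
        (c', r') = (c, r) ∨ M.prS s (some (c, r)) (some (c', r'))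
  | none => ∀ c r, ¬ (Acceptable M s c r ∧ Feasible M (Function.update μ s (some (c, r))))

/-- A run of the serial dictatorship mechanism on a list of students:
`SDRun M l μ μ'` holds if starting from `μ` and processing the students of `l`
in order, each one receiving their most preferred feasible acceptable contract,
yields `μ'`. -/
inductive SDRun (M : Market S C R) : List S → Matching S C R → Matching S C R → Prop
  | nil (μ : Matching S C R) : SDRun M [] μ μ
  | cons (s : S) (l : List S) (μ : Matching S C R) (x : Option (C × Option R))
      (μ' : Matching S C R) (hx : BestChoice M μ s x)
      (h : SDRun M l (Function.update μ s x) μ') : SDRun M (s :: l) μ μ'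

/-- Student `s` weakly prefers `x` to `y`. -/
def WeaklyPrefers (M : Market S C R) (s : S) (x y : Option (C × Option R)) : Prop :=
  x = y ∨ M.prS s x y

/-- Pareto efficiency for students. -/
def ParetoEfficient (M : Market S C R) (μ : Matching S C R) : Prop :=
  ¬ ∃ μ' : Matching S C R, Feasible M μ' ∧
    (∀ s, WeaklyPrefers M s (μ' s) (μ s)) ∧ ∃ s, M.prS s (μ' s) (μ s)

end SD

/-- A strict total order induced by an injective rank function (rank 0 = best). -/
lemma isStrictTotalOrder_of_rank {α : Type*} (f : α → ℕ) (hf : Function.Injective f) :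
    IsStrictTotalOrder α (fun x y => f x < f y) where
  trichotomous a b := by
    intro h1 h2
    exact hf (le_antisymm (not_lt.mp h2) (not_lt.mp h1))
  irrefl a := lt_irrefl (f a)
  trans a b c h1 h2 := lt_trans h1 h2

end RRC

/-!
When a student chooses, the current matching is the final matching restricted to the earlier
students. Since unmatching students preserves feasibility, any contract that waste-blocks the
final matching, or that a Pareto improvement gives to the first student it changes, was
available at that student's turn and would have been chosen.
-/

theorem List.forall_mem_of_forall_prefix {α : Type*} {p : α → Prop} :
    ∀ {l : List α}, (∀ l₁ a l₂, l = l₁ ++ a :: l₂ → (∀ b ∈ l₁, p b) → p a) → ∀ a ∈ l, p a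
  | [], _ => by simp
  | x :: l, h => by
    have hx : p x := h [] x l rfl (by simp)
    refine List.forall_mem_cons.2 ⟨hx, List.forall_mem_of_forall_prefix fun l₁ a l₂ hl hpre => ?_⟩
    exact h (x :: l₁) a l₂ (by rw [hl]; rfl) (List.forall_mem_cons.2 ⟨hx, hpre⟩)

namespace RRC

variable {S C R : Type}

namespace Market

variable (M : Market S C R) (s : S)

theorem prS_irrefl (x : Option (C × Option R)) : ¬ M.prS s x x :=
  (M.prS_sto s).irrefl x

theorem prS_trans {x y z : Option (C × Option R)} (hxy : M.prS s x y) (hyz : M.prS s y z) :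
    M.prS s x z :=
  (M.prS_sto s).trans x y z hxy hyz

theorem prS_asymm {x y : Option (C × Option R)} (hxy : M.prS s x y) : ¬ M.prS s y x :=
  fun hyx => M.prS_irrefl s x (M.prS_trans s hxy hyx)

end Market

section Submatching

def IsSubmatching (ν μ : Matching S C R) : Prop :=
  ∀ s, ν s = none ∨ ν s = μ s

theorem Feasible.of_isSubmatching [Finite S] {M : Market S C R} {ν μ : Matching S C R}
    (hμ : Feasible M μ) (h : IsSubmatching ν μ) : Feasible M ν := by
  obtain ⟨hC, hR, hregion⟩ := hμ
  have hsome : ∀ {s x}, ν s = some x → μ s = some x := fun {s x} hs =>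
    (h s).elim (fun hn => by simp [hn] at hs) (fun he => he ▸ hs)
  refine ⟨fun c => le_trans (Set.ncard_le_ncard ?_) (hC c),
    fun r => le_trans (Set.ncard_le_ncard ?_) (hR r), fun s c r hs => hregion s c r (hsome hs)⟩
  · exact fun s ⟨r, hr⟩ => ⟨r, hsome hr⟩
  · exact fun s ⟨c, hc⟩ => ⟨c, hsome hc⟩

theorem feasible_none (M : Market S C R) : Feasible M fun _ : S => none :=
  ⟨fun c => by simp [collegeCount], fun r => by simp [resourceCount], fun _ _ _ h => nomatch h⟩

variable [DecidableEq S]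

def restrict (μ : Matching S C R) (l : List S) : Matching S C R :=
  fun s => if s ∈ l then μ s else none

theorem isSubmatching_restrict (μ : Matching S C R) (l : List S) :
    IsSubmatching (restrict μ l) μ := by
  intro s
  unfold restrict
  split_ifs <;> simp

theorem isSubmatching_update_none (μ : Matching S C R) (s : S) :
    IsSubmatching (Function.update μ s none) μ := by
  intro t
  by_cases hts : t = s <;> simp [hts]

theorem IsSubmatching.update {ν μ : Matching S C R} (h : IsSubmatching ν μ) (s : S)
    (x : Option (C × Option R)) :
    IsSubmatching (Function.update ν s x) (Function.update μ s x) := by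
  intro t
  by_cases hts : t = s
  · simp [hts]
  · simpa [hts] using h t

end Submatching

section BestChoice

variable [DecidableEq S] {M : Market S C R} {ν : Matching S C R} {s : S}
  {y : Option (C × Option R)}

theorem BestChoice.not_prS (hbc : BestChoice M ν s y) {x : Option (C × Option R)}
    (hx : Feasible M (Function.update ν s x)) : ¬ M.prS s x y := by
  intro hxy
  match y, hbc, x, hx, hxy with
  | none, hbc, some (c, r), hx, hxy => exact hbc c r ⟨hxy, hx⟩
  | none, _, none, _, hxy => exact M.prS_irrefl s none hxy
  | some _, hbc, none, _, hxy => exact M.prS_asymm s hbc.1 hxy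
  | some (c₀, r₀), hbc, some (c, r), hx, hxy =>
    rcases hbc.2.2 c r (M.prS_trans s hxy hbc.1) hx with heq | hlt
    · rw [heq] at hxy
      exact M.prS_irrefl s _ hxy
    · exact M.prS_asymm s hxy hlt

theorem BestChoice.feasible_update [Finite S] (hbc : BestChoice M ν s y)
    (hν : Feasible M ν) : Feasible M (Function.update ν s y) :=
  match y, hbc with
  | some _, hbc => hbc.2.1
  | none, _ => hν.of_isSubmatching (isSubmatching_update_none ν s)

theorem BestChoice.indRational_update (hbc : BestChoice M ν s y) (hν : IndRational M ν) :
    IndRational M (Function.update ν s y) := by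
  intro t x hx
  by_cases hts : t = s
  · subst hts
    rw [Function.update_self] at hx
    subst hx
    exact hbc.1
  · rw [Function.update_of_ne hts] at hx
    exact hν t x hx

end BestChoice

namespace SDRun

variable [DecidableEq S] {M : Market S C R} {l : List S} {ν μ : Matching S C R}

theorem apply_of_not_mem (h : SDRun M l ν μ) {t : S} (ht : t ∉ l) : μ t = ν t := by
  induction h with
  | nil => rfl
  | cons s l ν x μ _ _ ih =>
    rw [List.mem_cons, not_or] at ht
    rw [ih ht.2, Function.update_of_ne ht.1]

theorem of_append {l₁ l₂ : List S} (h : SDRun M (l₁ ++ l₂) ν μ) :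
    ∃ ν', SDRun M l₁ ν ν' ∧ SDRun M l₂ ν' μ := by
  induction l₁ generalizing ν with
  | nil => exact ⟨ν, nil ν, h⟩
  | cons s l₁ ih =>
    cases h with
    | cons _ _ _ x _ hx h =>
      obtain ⟨ν', h₁, h₂⟩ := ih h
      exact ⟨ν', cons s l₁ ν x ν' hx h₁, h₂⟩

theorem feasible [Finite S] (h : SDRun M l ν μ) (hν : Feasible M ν) : Feasible M μ := by
  induction h with
  | nil => exact hν
  | cons _ _ _ _ _ hx _ ih => exact ih (hx.feasible_update hν)

theorem indRational (h : SDRun M l ν μ) (hν : IndRational M ν) : IndRational M μ := by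
  induction h with
  | nil => exact hν
  | cons _ _ _ _ _ hx _ ih => exact ih (hx.indRational_update hν)

theorem bestChoice_restrict {l₁ l₂ : List S} {s : S}
    (h : SDRun M (l₁ ++ s :: l₂) (fun _ => none) μ) (hnd : (l₁ ++ s :: l₂).Nodup) :
    BestChoice M (restrict μ l₁) s (μ s) := by
  obtain ⟨ν, h₁, h₂⟩ := h.of_append
  obtain ⟨-, hnd₂, hdisj⟩ := List.nodup_append'.mp hnd
  have hν : ν = restrict μ l₁ := by
    funext t
    unfold restrict
    split_ifs with ht
    · exact (h₂.apply_of_not_mem fun ht' => hdisj ht ht').symm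
    · exact h₁.apply_of_not_mem ht
  cases h₂ with
  | cons _ _ _ x _ hx h₂ =>
    rw [h₂.apply_of_not_mem (List.nodup_cons.mp hnd₂).1, Function.update_self, ← hν]
    exact hx

variable [Finite S] (h : SDRun M l (fun _ => none) μ) (hnd : l.Nodup) (hall : ∀ s, s ∈ l)
include h hnd hall

theorem nonWasteful : NonWasteful M μ := by
  rintro s c r ⟨-, hpref, hfeas⟩
  obtain ⟨l₁, l₂, rfl⟩ := List.append_of_mem (hall s)
  have hsub := (isSubmatching_restrict μ l₁).update s (some (c, r))
  exact (h.bestChoice_restrict hnd).not_prS (hfeas.of_isSubmatching hsub) hpref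

theorem paretoEfficient : ParetoEfficient M μ := by
  rintro ⟨μ', hμ', hweak, s₀, hs₀⟩
  have hagree : ∀ s ∈ l, μ' s = μ s := by
    refine List.forall_mem_of_forall_prefix fun l₁ s l₂ hl hpre => ?_
    subst hl
    refine (hweak s).resolve_right fun hlt => ?_
    have hrestrict : restrict μ l₁ = restrict μ' l₁ := by
      funext t
      unfold restrict
      split_ifs with ht
      exacts [(hpre t ht).symm, rfl]
    have hsub : IsSubmatching (Function.update (restrict μ l₁) s (μ' s)) μ' := by
      simpa [hrestrict] using (isSubmatching_restrict μ' l₁).update s (μ' s)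
    exact (h.bestChoice_restrict hnd).not_prS (hμ'.of_isSubmatching hsub) hlt
  rw [hagree s₀ (hall s₀)] at hs₀
  exact M.prS_irrefl s₀ _ hs₀

end SDRun

theorem serialDictatorship_properties_general
    {S C R : Type} [Fintype S] [DecidableEq S]
    (M : Market S C R) (l : List S) (hnd : l.Nodup) (hall : ∀ s, s ∈ l)
    (μ : Matching S C R) (h : SDRun M l (fun _ => none) μ) :
    Feasible M μ ∧ IndRational M μ ∧ NonWasteful M μ ∧ ParetoEfficient M μ :=
  ⟨h.feasible (feasible_none M), h.indRational (fun _ _ hx => nomatch hx),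
    h.nonWasteful hnd hall, h.paretoEfficient hnd hall⟩

/-- For every RRC market and every linear order of the students,
the serial dictatorship matching is feasible, individually rational, non-wasteful,
and Pareto-efficient for students. -/
theorem serialDictatorship_properties
    {S C R : Type} [Fintype S] [DecidableEq S] [Fintype C] [DecidableEq C]
    [Fintype R] [DecidableEq R]
    (M : Market S C R) (l : List S) (hnd : l.Nodup) (hall : ∀ s, s ∈ l)
    (μ : Matching S C R) (h : SDRun M l (fun _ => none) μ) :
    Feasible M μ ∧ IndRational M μ ∧ NonWasteful M μ ∧ ParetoEfficient M μ :=
  serialDictatorship_properties_general M l hnd hall μ h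

end RRC
end

section
/- In an RRC market with no non-empty resources (R = ∅, so the only resource is r0), a feasible individually rational matching is direct-envy stable if and only if it is stable. -/
namespace RRC

section

variable {S C R : Type} [DecidableEq S]

section Counting

variable [Finite S]

lemma collegeCount_update_self (μ : Matching S C R) {s : S} {c : C} (r : Option R)
    (hs : ∀ r', μ s ≠ some (c, r')) :
    collegeCount (Function.update μ s (some (c, r))) c = collegeCount μ c + 1 := by
  have hset : {t | ∃ r', Function.update μ s (some (c, r)) t = some (c, r')}
      = insert s {t | ∃ r', μ t = some (c, r')} := by
    ext t
    by_cases ht : t = s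
    · subst ht
      simp
    · simp [ht]
  rw [collegeCount, collegeCount, hset, Set.ncard_insert_of_notMem (by simpa using hs)]

lemma collegeCount_update_of_ne (μ : Matching S C R) (s : S) {c c' : C} (r : Option R)
    (hc : c ≠ c') :
    collegeCount (Function.update μ s (some (c, r))) c' ≤ collegeCount μ c' := by
  refine Set.ncard_le_ncard fun t ⟨r', hr'⟩ => ?_
  by_cases ht : t = s
  · subst ht
    simp only [Function.update_self, Option.some.injEq, Prod.mk.injEq] at hr'
    exact (hc hr'.1).elim
  · exact ⟨r', by rwa [Function.update_of_ne ht] at hr'⟩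

lemma resourceCount_update_none_le (μ : Matching S C R) (s : S) (c : C) (r : R) :
    resourceCount (Function.update μ s (some (c, none))) r ≤ resourceCount μ r := by
  refine Set.ncard_le_ncard fun t ⟨c', hc'⟩ => ?_
  by_cases ht : t = s
  · subst ht
    simp at hc'
  · exact ⟨c', by rwa [Function.update_of_ne ht] at hc'⟩

lemma feasible_update_none_iff {M : Market S C R} {μ : Matching S C R} (hμ : Feasible M μ)
    {s : S} {c : C} (hs : ∀ r, μ s ≠ some (c, r)) :
    Feasible M (Function.update μ s (some (c, none))) ↔ collegeCount μ c < M.qC c := by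
  constructor
  · rintro ⟨hcollege, -, -⟩
    have := hcollege c
    rw [collegeCount_update_self μ none hs] at this
    omega
  · intro hc
    refine ⟨fun c' => ?_, fun r => (resourceCount_update_none_le μ s c r).trans (hμ.2.1 r),
      fun t c' r ht => ?_⟩
    · by_cases hcc : c = c'
      · subst hcc
        rw [collegeCount_update_self μ none hs]
        omega
      · exact (collegeCount_update_of_ne μ s none hcc).trans (hμ.1 c')
    · by_cases hts : t = s
      · subst hts
        simp at ht
      · exact hμ.2.2 t c' r (by rwa [Function.update_of_ne hts] at ht)

end Counting

lemma Stable.directEnvyStable {M : Market S C R} {μ : Matching S C R} (h : Stable M μ) :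
    DirectEnvyStable M μ :=
  ⟨h.1, h.2.1, fun s c r ⟨s', r', henvy, _⟩ => h.2.2.1 s c r ⟨s', r', henvy⟩,
    fun s c r hwaste => (h.2.2.2 s c r hwaste).elim⟩

section NoResources

variable [IsEmpty R]

lemma directEnvyBlocks_iff_envyBlocks_of_isEmpty {M : Market S C R} {μ : Matching S C R}
    {s : S} {c : C} {r : Option R} : DirectEnvyBlocks M μ s c r ↔ EnvyBlocks M μ s c r :=
  ⟨fun ⟨s', r', henvy, _⟩ => ⟨s', r', henvy⟩,
    fun ⟨s', r', henvy⟩ => ⟨s', r', henvy, Or.inr (Subsingleton.elim r none)⟩⟩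

variable [Finite S]

lemma wasteBlocks_iff_of_isEmpty {M : Market S C R} {μ : Matching S C R} (hμ : Feasible M μ)
    {s : S} {c : C} {r : Option R} :
    WasteBlocks M μ s c r ↔
      μ s ≠ some (c, r) ∧ M.prS s (some (c, r)) (μ s) ∧ collegeCount μ c < M.qC c := by
  obtain rfl : r = none := Subsingleton.elim r none
  refine and_congr_right fun hs => and_congr_right fun _ => feasible_update_none_iff hμ ?_
  intro r'
  rwa [Subsingleton.elim r' none]

/-- A student who envies someone after `(s, c, r0)` is added was already free to take the seat
at `c` that `s` would have taken, so the dominating contract would waste-block `μ` itself. -/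
lemma not_dominates_of_isEmpty {M : Market S C R} {μ : Matching S C R} (hμ : Feasible M μ)
    {s s' : S} {c : C} {r r' : Option R} (hwaste : WasteBlocks M μ s c r) :
    ¬ Dominates M μ s c r s' r' := by
  rintro ⟨-, hnotWaste, -, -, -, ⟨hne, -, hpref, -, -⟩, -⟩
  have hs' : s' ≠ s := by
    rintro rfl
    exact hne (by rw [Function.update_self, Subsingleton.elim r r'])
  rw [Function.update_of_ne hs'] at hne hpref
  exact hnotWaste ((wasteBlocks_iff_of_isEmpty hμ).2
    ⟨hne, hpref, ((wasteBlocks_iff_of_isEmpty hμ).1 hwaste).2.2⟩)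

lemma DirectEnvyStable.stable_of_isEmpty {M : Market S C R} {μ : Matching S C R}
    (h : DirectEnvyStable M μ) : Stable M μ := by
  obtain ⟨hμ, hir, hnoDirect, hdominated⟩ := h
  refine ⟨hμ, hir, fun s c r henvy => hnoDirect s c r
    (directEnvyBlocks_iff_envyBlocks_of_isEmpty.2 henvy), fun s c r hwaste => ?_⟩
  obtain ⟨s', r', hdom⟩ := hdominated s c r hwaste
  exact not_dominates_of_isEmpty hμ hwaste hdom

end NoResources

end

theorem directEnvyStable_iff_stable_of_no_resources_general
    {S C R : Type} [Fintype S] [DecidableEq S] (hR : IsEmpty R)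
    (M : Market S C R) (μ : Matching S C R) :
    DirectEnvyStable M μ ↔ Stable M μ :=
  ⟨DirectEnvyStable.stable_of_isEmpty, Stable.directEnvyStable⟩

/-- In an RRC market with no non-empty resources, a feasible
individually rational matching is direct-envy stable if and only if it is stable. -/
theorem directEnvyStable_iff_stable_of_no_resources
    {S C R : Type} [Fintype S] [DecidableEq S] [Fintype C] [DecidableEq C]
    [Fintype R] [DecidableEq R] (hR : IsEmpty R)
    (M : Market S C R) (μ : Matching S C R)
    (hfeas : Feasible M μ) (hir : IndRational M μ) :
    DirectEnvyStable M μ ↔ Stable M μ :=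
  directEnvyStable_iff_stable_of_no_resources_general hR M μ

end RRC
end
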